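/- For every closed set K ⊆ ℝⁿ with ∫_K |x|₁ dλ_n(x) < ∞, the function t ↦ λ_n(tK) is differentiable at t = 1 and (d/dt) λ_n(tK)|_{t=1} = n·λ_n(K) − ∫_K |x|₁ dλ_n(x). -/

import Mathlib

/-!
Substituting `x ↦ t • x` gives `λ_n(tK) = tⁿ · 2⁻ⁿ ∫_K exp (-t|x|₁) dx`. The integral is a Laplace
transform in `t`, which may be differentiated under the integral sign near `t = 1` because
`|x|₁ exp (-t|x|₁)` is dominated there by a multiple of `exp (-|x|₁/2)`, integrable on all of `ℝⁿ`.
The product rule at `t = 1` yields the two terms.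
-/

open MeasureTheory Real Set
open scoped Pointwise

/-- The standard exponential measure `λ_n` on `ℝⁿ`, with density
`2⁻ⁿ exp(-|x|₁)` with respect to Lebesgue measure. -/
noncomputable def lamR (n : ℕ) : MeasureTheory.Measure (Fin n → ℝ) :=
  MeasureTheory.volume.withDensity fun x =>
    ENNReal.ofReal (((2 : ℝ) ^ n)⁻¹ * Real.exp (-(∑ i, |x i|)))

open Topology

theorem integrable_exp_neg_mul_abs {b : ℝ} (hb : 0 < b) :
    Integrable fun x : ℝ => exp (-(b * |x|)) := by
  have hIoi : IntegrableOn (fun x : ℝ => exp (-(b * |x|))) (Ioi 0) :=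
    (exp_neg_integrableOn_Ioi 0 hb).congr_fun
      (fun x hx => by simp [abs_of_pos (mem_Ioi.mp hx)]) measurableSet_Ioi
  have hIic : IntegrableOn (fun x : ℝ => exp (-(b * |x|))) (Iic 0) := by
    rw [← (Measure.measurePreserving_neg volume).integrableOn_comp_preimage
      (Homeomorph.neg ℝ).measurableEmbedding]
    simpa [Function.comp_def] using Iff.mpr integrableOn_Ici_iff_integrableOn_Ioi hIoi
  rw [← integrableOn_univ, ← Iic_union_Ioi (a := (0 : ℝ))]
  exact hIic.union hIoi

theorem integrable_exp_neg_mul_sum_abs {ι : Type*} [Fintype ι] {b : ℝ} (hb : 0 < b) :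
    Integrable fun x : ι → ℝ => exp (-(b * ∑ i, |x i|)) := by
  simpa [Finset.mul_sum, ← Real.exp_sum, volume_pi] using
    Integrable.fintype_prod (μ := fun _ : ι => volume) fun _ => integrable_exp_neg_mul_abs hb

theorem mul_exp_neg_mul_le {c : ℝ} (hc : 0 < c) (u : ℝ) : u * exp (-(c * u)) ≤ exp (-1) / c := by
  rw [le_div_iff₀ hc]
  linarith [mul_exp_neg_le_exp_neg_one (c * u)]

theorem hasDerivAt_integral_exp_neg_mul {α : Type*} [MeasurableSpace α] {μ : Measure α}
    {f : α → ℝ} (hf : AEStronglyMeasurable f μ) (hf₀ : 0 ≤ᵐ[μ] f) {b t₀ : ℝ} (hbt : b < t₀)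
    (hint : Integrable (fun x => exp (-(b * f x))) μ) :
    HasDerivAt (fun t => ∫ x, exp (-(t * f x)) ∂μ) (∫ x, -(f x * exp (-(t₀ * f x))) ∂μ) t₀ := by
  set c := (t₀ - b) / 2 with hc_def
  have hc : 0 < c := by linarith
  have hmeas : ∀ t, AEStronglyMeasurable (fun x => exp (-(t * f x))) μ := fun t =>
    (continuous_exp.comp_aestronglyMeasurable (hf.const_mul t).neg)
  have hdom : ∀ t, b ≤ t → ∀ x, 0 ≤ f x → exp (-(t * f x)) ≤ exp (-(b * f x)) := fun t ht x hx =>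
    exp_le_exp.mpr (neg_le_neg (mul_le_mul_of_nonneg_right ht hx))
  refine (hasDerivAt_integral_of_dominated_loc_of_deriv_le (Metric.ball_mem_nhds t₀ hc)
    (.of_forall hmeas) ?_ (hf.mul (hmeas t₀)).neg
    (F' := fun t x => -(f x * exp (-(t * f x))))
    (bound := fun x => exp (-1) / c * exp (-(b * f x)))
    ?_ (hint.const_mul _) ?_).2
  · refine hint.mono' (hmeas t₀) (hf₀.mono fun x hx => ?_)
    rw [norm_of_nonneg (exp_pos _).le]
    exact hdom t₀ hbt.le x hx
  · filter_upwards [hf₀] with x hx t ht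
    have htc : b + c ≤ t := by
      have := (abs_lt.mp (Real.dist_eq t t₀ ▸ Metric.mem_ball.mp ht)).1
      linarith
    calc ‖-(f x * exp (-(t * f x)))‖ = f x * exp (-(c * f x)) * exp (-((t - c) * f x)) := by
          rw [norm_neg, norm_of_nonneg (mul_nonneg hx (exp_pos _).le), mul_assoc, ← exp_add]
          ring_nf
      _ ≤ exp (-1) / c * exp (-(b * f x)) :=
          mul_le_mul (mul_exp_neg_mul_le hc _) (hdom _ (by linarith) x hx) (by positivity)
            (by positivity)
  · refine .of_forall fun x t _ => (hasDerivAt_mul_const (f x) (x := t)).neg.exp.congr_deriv ?_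
    simp only [Pi.neg_apply, mul_neg, neg_inj]
    ring

theorem setIntegral_lamR {n : ℕ} (s : Set (Fin n → ℝ)) (g : (Fin n → ℝ) → ℝ) :
    ∫ x in s, g x ∂lamR n = ((2 : ℝ) ^ n)⁻¹ * ∫ x in s, g x * exp (-(∑ i, |x i|)) := by
  rw [lamR, setIntegral_withDensity_eq_setIntegral_toReal_smul' s (by fun_prop)
    (.of_forall fun _ => ENNReal.ofReal_lt_top), ← integral_const_mul]
  congr 1 with x
  rw [smul_eq_mul, ENNReal.toReal_ofReal (by positivity)]
  ring

theorem lamR_toReal {n : ℕ} (s : Set (Fin n → ℝ)) :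
    (lamR n s).toReal = ((2 : ℝ) ^ n)⁻¹ * ∫ x in s, exp (-(∑ i, |x i|)) := by
  simpa [measureReal_def] using setIntegral_lamR s fun _ => 1

theorem lamR_smul_toReal {n : ℕ} (s : Set (Fin n → ℝ)) {t : ℝ} (ht : 0 < t) :
    (lamR n (t • s)).toReal = t ^ n * (((2 : ℝ) ^ n)⁻¹ * ∫ x in s, exp (-(t * ∑ i, |x i|))) := by
  have h := Measure.setIntegral_comp_smul_of_pos volume
    (fun x : Fin n → ℝ => exp (-(∑ i, |x i|))) s ht
  rw [Module.finrank_fin_fun, smul_eq_mul, eq_inv_mul_iff_mul_eq₀ (by positivity)] at h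
  rw [lamR_toReal, ← h]
  simp only [Pi.smul_apply, smul_eq_mul, abs_mul, abs_of_pos ht, Finset.mul_sum]
  ring

theorem hasDerivAt_exponential_dilation_general
    (n : ℕ) (K : Set (Fin n → ℝ)) :
    HasDerivAt (fun t : ℝ => (lamR n (t • K)).toReal)
      (n * (lamR n K).toReal - ∫ x in K, ∑ i, |x i| ∂(lamR n)) 1 := by
  have hL := hasDerivAt_integral_exp_neg_mul (μ := volume.restrict K) (b := 1 / 2) (t₀ := 1)
    (by fun_prop : Continuous fun x : Fin n → ℝ => ∑ i, |x i|).aestronglyMeasurable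
    (.of_forall fun x => by positivity) (by norm_num)
    (integrable_exp_neg_mul_sum_abs (by norm_num)).restrict
  have hdil : (fun t : ℝ => (lamR n (t • K)).toReal) =ᶠ[𝓝 1]
      fun t => t ^ n * (((2 : ℝ) ^ n)⁻¹ * ∫ x in K, exp (-(t * ∑ i, |x i|))) :=
    (lt_mem_nhds one_pos).mono fun t ht => lamR_smul_toReal K ht
  refine (((hasDerivAt_pow n 1).mul (hL.const_mul _)).congr_of_eventuallyEq hdil).congr_deriv ?_
  rw [lamR_toReal, setIntegral_lamR, integral_neg]
  simp only [one_pow, mul_one, one_mul, mul_neg, sub_eq_add_neg]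

/-- For a closed set `K ⊆ ℝⁿ` with `∫_K |x|₁ dλ_n < ∞`, the function
`t ↦ λ_n(tK)` is differentiable at `t = 1` with derivative
`n·λ_n(K) - ∫_K |x|₁ dλ_n(x)`. -/
theorem hasDerivAt_exponential_dilation
    (n : ℕ) (K : Set (Fin n → ℝ)) (hK_closed : IsClosed K)
    (hint : IntegrableOn (fun x => ∑ i, |x i|) K (lamR n)) :
    HasDerivAt (fun t : ℝ => (lamR n (t • K)).toReal)
      (n * (lamR n K).toReal - ∫ x in K, ∑ i, |x i| ∂(lamR n)) 1 :=
  hasDerivAt_exponential_dilation_general n K
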